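/- arXiv:hep-th/0408204 — 2 statements merged into one kernel-verified Lean document; each statement's English description precedes it below -/
import Mathlib

section
/- A contraction C in N is aplanar if every connected component of C has a nontrivial enclosure matrix, i.e., for every component C' there exist a ∈ A_{C'} and u ∈ U with a < u < α(a). Theorem: the empty contraction is both quasiplanar (in C_qp(N)) and aplanar, and a nonempty contraction cannot be simultaneously in C_qp(N) and aplanar. -/
/-- Intersection relation between contracted pairs of `(A, α)`. -/
def interRelOn (A : Finset ℕ) (α : ℕ → ℕ) (a b : ℕ) : Prop :=
  a ∈ A ∧ b ∈ A ∧
    ((a < b ∧ b < α a ∧ α a < α b) ∨ (b < a ∧ a < α b ∧ α b < α a))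

/-- Same connected component. -/
def sameComp (A : Finset ℕ) (α : ℕ → ℕ) (a b : ℕ) : Prop :=
  Relation.EqvGen (interRelOn A α) a b

/-- `C ∈ 𝒞_qp(N)`: every connected component is quasiplanar, i.e. no pair of
any component encloses an uncontracted index `u ∈ U = N \ (A ∪ α(A))`. -/
def MemCqp (N A : Finset ℕ) (α : ℕ → ℕ) : Prop :=
  ∀ a ∈ A, ∀ b ∈ A, sameComp A α a b →
    ∀ u ∈ N \ (A ∪ A.image α), ¬(b < u ∧ u < α b)

/-- `C ∈ 𝒞_ap(N)`: every connected component has a nontrivial enclosure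
matrix, i.e. each component contains a pair enclosing some `u ∈ U`. -/
def MemCap (N A : Finset ℕ) (α : ℕ → ℕ) : Prop :=
  ∀ a ∈ A, ∃ b ∈ A, sameComp A α a b ∧
    ∃ u ∈ N \ (A ∪ A.image α), b < u ∧ u < α b

/-- The empty contraction is both in `𝒞_qp(N)` and aplanar,
and a nonempty contraction can never be simultaneously in `𝒞_qp(N)` and
aplanar. -/
theorem empty_in_both_nonempty_in_neither
    (N A : Finset ℕ) (α : ℕ → ℕ)
    (hA : A ⊆ N)
    (hmemN : ∀ a ∈ A, α a ∈ N)
    (hnotA : ∀ a ∈ A, α a ∉ A)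
    (hgt : ∀ a ∈ A, a < α a)
    (hinj : Set.InjOn α A) :
    (A = ∅ → MemCqp N A α ∧ MemCap N A α) ∧
    (A ≠ ∅ → ¬(MemCqp N A α ∧ MemCap N A α)) := by
  constructor
  · rintro rfl
    constructor
    · intro a ha; simp at ha
    · intro a ha; simp at ha
  · rintro hne ⟨hqp, hap⟩
    obtain ⟨a, ha⟩ := Finset.nonempty_iff_ne_empty.2 hne
    obtain ⟨b, hb, hsc, u, hu, h1, h2⟩ := hap a ha
    exact hqp a ha b hb hsc u hu ⟨h1, h2⟩
end

section
/- Abstract Wick theorem identity: let R be a commutative ring and for each finite ordered set N let W(N), Φ(N) ∈ R be given with Φ(N) = ∑_{C ∈ 𝒞(N)} W(U_C) · w(C), where w(C) is a multiplicative weight over contracted pairs and U_C is the uncontracted set. Then W(N) = ∑_{C ∈ 𝒞(N)} (−1)^{|A_C|} Φ(U_C) · w(C), i.e., the 'Wick subtraction' sum ∑_C (−1)^{|A_C|} is Möbius-inverse to the sum over contractions. -/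
/-- The set `𝒞(S)` of contractions of the finite ordered set `S ⊆ ℕ`, encoded
as sets of pairs `(a, α a)` with `a < α a` and pairwise distinct endpoints. -/
def contrs (S : Finset ℕ) : Finset (Finset (ℕ × ℕ)) :=
  (S ×ˢ S).powerset.filter (fun M =>
    (∀ p ∈ M, p.1 < p.2) ∧
    (∀ p ∈ M, ∀ q ∈ M, p ≠ q →
      p.1 ≠ q.1 ∧ p.1 ≠ q.2 ∧ p.2 ≠ q.1 ∧ p.2 ≠ q.2))

/-- The uncontracted set `U_C` of a contraction `C = M` of `S`. -/
def unc (S : Finset ℕ) (M : Finset (ℕ × ℕ)) : Finset ℕ :=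
  S \ (M.image Prod.fst ∪ M.image Prod.snd)

open Finset

lemma mem_contrs {S : Finset ℕ} {M : Finset (ℕ × ℕ)} :
    M ∈ contrs S ↔ M ⊆ S ×ˢ S ∧ (∀ p ∈ M, p.1 < p.2) ∧
      (∀ p ∈ M, ∀ q ∈ M, p ≠ q →
        p.1 ≠ q.1 ∧ p.1 ≠ q.2 ∧ p.2 ≠ q.1 ∧ p.2 ≠ q.2) := by
  simp [contrs, and_assoc]

lemma mem_unc {S : Finset ℕ} {M : Finset (ℕ × ℕ)} {x : ℕ} :
    x ∈ unc S M ↔ x ∈ S ∧ ∀ p ∈ M, p.1 ≠ x ∧ p.2 ≠ x := by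
  simp only [unc, mem_sdiff, mem_union, mem_image, not_or, not_exists, Prod.exists]
  constructor
  · rintro ⟨hx, h1, h2⟩
    exact ⟨hx, fun p hp => ⟨fun e => h1 p.1 p.2 ⟨by simpa using hp, e⟩,
      fun e => h2 p.1 p.2 ⟨by simpa using hp, e⟩⟩⟩
  · rintro ⟨hx, h⟩
    exact ⟨hx, fun a b hab => (h (a,b) hab.1).1 hab.2,
      fun a b hab => (h (a,b) hab.1).2 hab.2⟩

lemma sum_neg_one_pow {R : Type*} [CommRing R] (s : Finset (ℕ × ℕ)) :
    ∑ t ∈ s.powerset, (-1 : R) ^ t.card = if s = ∅ then 1 else 0 := by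
  have h0 := Finset.prod_add (fun _ : ℕ × ℕ => (-1 : R)) (fun _ => 1) s
  simp only [neg_add_cancel, Finset.prod_const, Finset.prod_const_one, mul_one, one_pow] at h0
  rw [← h0]
  rcases eq_or_ne s ∅ with rfl | hne
  · simp
  · rw [if_neg hne, zero_pow]
    simpa [Finset.card_eq_zero] using hne

lemma unc_union (S : Finset ℕ) (M M' : Finset (ℕ × ℕ)) :
    unc S (M ∪ M') = unc (unc S M) M' := by
  simp only [unc, image_union]
  ext x
  simp only [mem_sdiff, mem_union]
  tauto

lemma union_mem_contrs {S : Finset ℕ} {M M' : Finset (ℕ × ℕ)}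
    (hM : M ∈ contrs S) (hM' : M' ∈ contrs (unc S M)) :
    M ∪ M' ∈ contrs S := by
  rw [mem_contrs] at hM hM' ⊢
  obtain ⟨hMs, hMlt, hMd⟩ := hM
  obtain ⟨hM's, hM'lt, hM'd⟩ := hM'
  have hsub : unc S M ⊆ S := sdiff_subset
  have cross : ∀ p ∈ M, ∀ q ∈ M',
      p.1 ≠ q.1 ∧ p.1 ≠ q.2 ∧ p.2 ≠ q.1 ∧ p.2 ≠ q.2 := by
    intro p hp q hq
    have hq' := hM's hq
    rw [mem_product] at hq'
    have h1 := (mem_unc.mp hq'.1).2 p hp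
    have h2 := (mem_unc.mp hq'.2).2 p hp
    exact ⟨h1.1, h2.1, h1.2, h2.2⟩
  refine ⟨?_, ?_, ?_⟩
  · intro p hp
    rcases mem_union.mp hp with hp | hp
    · exact hMs hp
    · have := hM's hp
      rw [mem_product] at this ⊢
      exact ⟨hsub this.1, hsub this.2⟩
  · intro p hp
    rcases mem_union.mp hp with hp | hp
    · exact hMlt p hp
    · exact hM'lt p hp
  · intro p hp q hq hpq
    rcases mem_union.mp hp with hp | hp <;> rcases mem_union.mp hq with hq | hq
    · exact hMd p hp q hq hpq
    · exact cross p hp q hq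
    · have := cross q hq p hp; tauto
    · exact hM'd p hp q hq hpq

lemma disjoint_of_contrs {S : Finset ℕ} {M M' : Finset (ℕ × ℕ)}
    (hM' : M' ∈ contrs (unc S M)) : Disjoint M M' := by
  rw [Finset.disjoint_left]
  intro p hpM hpM'
  rw [mem_contrs] at hM'
  have := hM'.1 hpM'
  rw [mem_product] at this
  exact (mem_unc.mp this.1).2 p hpM |>.1 rfl

lemma subset_mem_contrs {S : Finset ℕ} {C M : Finset (ℕ × ℕ)}
    (hC : C ∈ contrs S) (hM : M ⊆ C) : M ∈ contrs S := by
  rw [mem_contrs] at hC ⊢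
  exact ⟨hM.trans hC.1, fun p hp => hC.2.1 p (hM hp),
    fun p hp q hq => hC.2.2 p (hM hp) q (hM hq)⟩

lemma sdiff_mem_contrs {S : Finset ℕ} {C M : Finset (ℕ × ℕ)}
    (hC : C ∈ contrs S) (hM : M ⊆ C) : C \ M ∈ contrs (unc S M) := by
  rw [mem_contrs] at hC ⊢
  obtain ⟨hCs, hClt, hCd⟩ := hC
  refine ⟨?_, fun p hp => hClt p (mem_sdiff.mp hp).1,
    fun p hp q hq => hCd p (mem_sdiff.mp hp).1 q (mem_sdiff.mp hq).1⟩
  intro p hp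
  rw [mem_sdiff] at hp
  obtain ⟨hpC, hpM⟩ := hp
  have hpS := hCs hpC
  rw [mem_product] at hpS ⊢
  have key : ∀ q ∈ M, q.1 ≠ p.1 ∧ q.2 ≠ p.1 ∧ q.1 ≠ p.2 ∧ q.2 ≠ p.2 := by
    intro q hq
    have hne : q ≠ p := fun hqp => hpM (hqp ▸ hq)
    have := hCd q (hM hq) p hpC hne
    tauto
  constructor
  · rw [mem_unc]
    exact ⟨hpS.1, fun q hq => ⟨(key q hq).1, (key q hq).2.1⟩⟩
  · rw [mem_unc]
    exact ⟨hpS.2, fun q hq => ⟨(key q hq).2.2.1, (key q hq).2.2.2⟩⟩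

/-- **abstract Wick theorem / Möbius inversion.** If for every
ordered subset `S` of `N` the family `Φ` is obtained from `W` by summing over
all contractions with multiplicative pair weights,
`Φ(S) = ∑_{C ∈ 𝒞(S)} W(U_C) · w(C)`, then conversely
`W(S) = ∑_{C ∈ 𝒞(S)} (−1)^{|A_C|} Φ(U_C) · w(C)`. -/
theorem abstract_wick_inversion {R : Type*} [CommRing R]
    (N : Finset ℕ) (w : ℕ → ℕ → R) (W Φ : Finset ℕ → R)
    (h : ∀ S ⊆ N, Φ S = ∑ M ∈ contrs S, W (unc S M) * ∏ p ∈ M, w p.1 p.2) :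
    ∀ S ⊆ N, W S = ∑ M ∈ contrs S,
      (-1 : R) ^ M.card * Φ (unc S M) * ∏ p ∈ M, w p.1 p.2 := by
  intro S hS
  have huncS : ∀ M, unc S M ⊆ S := fun M => sdiff_subset
  symm
  calc ∑ M ∈ contrs S, (-1 : R) ^ M.card * Φ (unc S M) * ∏ p ∈ M, w p.1 p.2
      = ∑ M ∈ contrs S, ∑ M' ∈ contrs (unc S M),
          (-1 : R) ^ M.card * W (unc S (M ∪ M')) * ∏ p ∈ M ∪ M', w p.1 p.2 := by
        refine Finset.sum_congr rfl fun M hM => ?_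
        rw [h (unc S M) ((huncS M).trans hS)]
        rw [Finset.mul_sum, Finset.sum_mul]
        refine Finset.sum_congr rfl fun M' hM' => ?_
        rw [unc_union, Finset.prod_union (disjoint_of_contrs hM')]
        ring
    _ = ∑ C ∈ contrs S, ∑ M ∈ C.powerset,
          (-1 : R) ^ M.card * W (unc S C) * ∏ p ∈ C, w p.1 p.2 := by
        rw [Finset.sum_sigma', Finset.sum_sigma']
        refine Finset.sum_nbij' (fun x => ⟨x.1 ∪ x.2, x.1⟩) (fun x => ⟨x.2, x.1 \ x.2⟩)
          ?_ ?_ ?_ ?_ ?_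
        · rintro ⟨M, M'⟩ hx
          rw [Finset.mem_sigma] at hx ⊢
          exact ⟨union_mem_contrs hx.1 hx.2, Finset.mem_powerset.mpr subset_union_left⟩
        · rintro ⟨C, M⟩ hx
          rw [Finset.mem_sigma] at hx ⊢
          have hMC := Finset.mem_powerset.mp hx.2
          exact ⟨subset_mem_contrs hx.1 hMC, sdiff_mem_contrs hx.1 hMC⟩
        · rintro ⟨M, M'⟩ hx
          rw [Finset.mem_sigma] at hx
          have hd : (M ∪ M') \ M = M' := Finset.union_sdiff_cancel_left (disjoint_of_contrs hx.2)
          simp [hd]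
        · rintro ⟨C, M⟩ hx
          rw [Finset.mem_sigma] at hx
          have hMC : M ∪ C \ M = C := Finset.union_sdiff_of_subset (Finset.mem_powerset.mp hx.2)
          simp [hMC]
        · rintro ⟨M, M'⟩ _
          rfl
    _ = ∑ C ∈ contrs S, (if C = ∅ then (1:R) else 0) * W (unc S C) * ∏ p ∈ C, w p.1 p.2 := by
        refine Finset.sum_congr rfl fun C hC => ?_
        rw [← Finset.sum_mul, ← Finset.sum_mul, sum_neg_one_pow]
    _ = W S := by
        rw [Finset.sum_eq_single (∅ : Finset (ℕ × ℕ))]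
        · simp [unc]
        · intro C hC hne
          simp [hne]
        · intro hne
          exact absurd (by rw [mem_contrs]; simp) hne
end
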